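/- arXiv:math/0410182 — 5 statements merged into one kernel-verified Lean document; each statement's English description precedes it below -/
import Mathlib

section
/- The q-exponential series f(z;q) = ∑_{n≥0} (1-q)^n z^n / ((1-q)(1-q^2)···(1-q^n)) equals the infinite product ∏_{n≥0} (1 - (1-q) z q^n)^{-1} as formal power series in z (for |q|<1, or in ℂ[[q]][[z]]). -/
/-!
With `(q; q)ₙ = (1 - q)⋯(1 - qⁿ)`, the series `e(u) = ∑ uⁿ / (q; q)ₙ` satisfies
`(1 - u) e(u) = e(qu)`, because `uⁿ - (qu)ⁿ = uⁿ (1 - qⁿ)` cancels the last factor of `(q; q)ₙ`.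
Iterating, `(1 - u)(1 - qu)⋯(1 - q^(N-1) u) e(u) = e(q^N u)`, and `e(q^N u) → e(0) = 1` by
dominated convergence, so `e(u) = ∏ₙ (1 - qⁿ u)⁻¹`. The theorem is the case `u = (1 - q) z`.
-/

open Filter Finset Topology

variable {𝕜 : Type*} [NormedField 𝕜] {q u : 𝕜}

lemma norm_pow_mul_le (hq : ‖q‖ < 1) (n : ℕ) (u : 𝕜) : ‖q ^ n * u‖ ≤ ‖u‖ := by
  rw [norm_mul, norm_pow]
  exact mul_le_of_le_one_left (norm_nonneg u) (pow_le_one₀ (norm_nonneg q) hq.le)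

lemma one_sub_ne_zero_of_norm_lt_one {x : 𝕜} (hx : ‖x‖ < 1) : 1 - x ≠ 0 := by
  rw [sub_ne_zero]
  rintro rfl
  simp at hx

noncomputable def qPochhammer (q : 𝕜) (n : ℕ) : 𝕜 := ∏ k ∈ Icc 1 n, (1 - q ^ k)

lemma qPochhammer_zero (q : 𝕜) : qPochhammer q 0 = 1 := by
  simp [qPochhammer]

lemma qPochhammer_succ (q : 𝕜) (n : ℕ) :
    qPochhammer q (n + 1) = qPochhammer q n * (1 - q ^ (n + 1)) :=
  prod_Icc_succ_top (by omega) _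

lemma inv_qPochhammer_eq_prod (q : 𝕜) (n : ℕ) :
    (qPochhammer q n)⁻¹ = ∏ k ∈ range n, (1 - q ^ k * q)⁻¹ := by
  induction n with
  | zero => simp [qPochhammer_zero]
  | succ n ih => rw [qPochhammer_succ, mul_inv, ih, prod_range_succ, ← pow_succ]

lemma qPochhammer_ne_zero (hq : ‖q‖ < 1) (n : ℕ) : qPochhammer q n ≠ 0 := by
  rw [Ne, ← inv_eq_zero, inv_qPochhammer_eq_prod]
  exact prod_ne_zero_iff.2 fun k _ ↦
    inv_ne_zero (one_sub_ne_zero_of_norm_lt_one ((norm_pow_mul_le hq k q).trans_lt hq))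

variable [CompleteSpace 𝕜]

lemma multipliable_inv_one_sub_pow_mul (hq : ‖q‖ < 1) (hu : ‖u‖ < 1) :
    Multipliable fun n : ℕ ↦ (1 - q ^ n * u)⁻¹ := by
  have hne (n : ℕ) : 1 - q ^ n * u ≠ 0 :=
    one_sub_ne_zero_of_norm_lt_one ((norm_pow_mul_le hq n u).trans_lt hu)
  have hinv (n : ℕ) : (1 - q ^ n * u)⁻¹ = 1 + q ^ n * u / (1 - q ^ n * u) := by
    field_simp [hne n]
    ring
  have hbound (n : ℕ) : ‖q ^ n * u / (1 - q ^ n * u)‖ ≤ ‖u‖ / (1 - ‖u‖) * ‖q‖ ^ n := by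
    have hden : 1 - ‖u‖ ≤ ‖1 - q ^ n * u‖ := by
      have := norm_sub_norm_le (1 : 𝕜) (q ^ n * u)
      rw [norm_one] at this
      linarith [norm_pow_mul_le hq n u]
    rw [norm_div, norm_mul, norm_pow, div_mul_eq_mul_div, mul_comm ‖u‖]
    gcongr
  simp_rw [hinv]
  exact multipliable_one_add_of_summable <| .of_nonneg_of_le (fun _ ↦ norm_nonneg _) hbound
    ((summable_geometric_of_lt_one (norm_nonneg q) hq).mul_left _)

lemma exists_norm_inv_qPochhammer_le (hq : ‖q‖ < 1) :
    ∃ C, ∀ n, ‖(qPochhammer q n)⁻¹‖ ≤ C := by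
  -- `(q; q)ₙ⁻¹` is a partial product of `∏ₖ (1 - qᵏ u)⁻¹` at `u = q`, which converges.
  simp_rw [inv_qPochhammer_eq_prod]
  obtain ⟨C, hC⟩ :=
    (multipliable_inv_one_sub_pow_mul hq hq).tendsto_prod_tprod_nat.norm.bddAbove_range
  exact ⟨C, fun n ↦ hC (Set.mem_range_self n)⟩

lemma summable_norm_pow_div_qPochhammer (hq : ‖q‖ < 1) (hu : ‖u‖ < 1) :
    Summable fun n ↦ ‖u ^ n / qPochhammer q n‖ := by
  obtain ⟨C, hC⟩ := exists_norm_inv_qPochhammer_le hq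
  refine .of_nonneg_of_le (fun _ ↦ norm_nonneg _) (fun n ↦ ?_)
    ((summable_geometric_of_lt_one (norm_nonneg u) hu).mul_right C)
  rw [div_eq_mul_inv, norm_mul, norm_pow]
  exact mul_le_mul_of_nonneg_left (hC n) (by positivity)

noncomputable def qExp (q u : 𝕜) : 𝕜 := ∑' n, u ^ n / qPochhammer q n

lemma one_sub_mul_qExp (hq : ‖q‖ < 1) (hu : ‖u‖ < 1) :
    (1 - u) * qExp q u = qExp q (q * u) := by
  have hS {v : 𝕜} (hv : ‖v‖ < 1) := (summable_norm_pow_div_qPochhammer hq hv).of_norm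
  have hqu : ‖q * u‖ < 1 := by simpa using (norm_pow_mul_le hq 1 u).trans_lt hu
  have hterm (n : ℕ) :
      u ^ (n + 1) / qPochhammer q (n + 1) - (q * u) ^ (n + 1) / qPochhammer q (n + 1)
        = u * (u ^ n / qPochhammer q n) := by
    have h₁ := one_sub_ne_zero_of_norm_lt_one ((norm_pow_mul_le hq n q).trans_lt hq)
    rw [← pow_succ] at h₁
    rw [qPochhammer_succ]
    field_simp [qPochhammer_ne_zero hq n, h₁]
    ring
  have hdiff : qExp q u - qExp q (q * u) = u * qExp q u := calc
    qExp q u - qExp q (q * u)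
      = ∑' n, (u ^ n / qPochhammer q n - (q * u) ^ n / qPochhammer q n) :=
        ((hS hu).tsum_sub (hS hqu)).symm
    _ = ∑' n, u * (u ^ n / qPochhammer q n) := by
        rw [((hS hu).sub (hS hqu)).tsum_eq_zero_add]
        simp [hterm]
    _ = u * qExp q u := tsum_mul_left
  linear_combination hdiff

lemma prod_one_sub_pow_mul_mul_qExp (hq : ‖q‖ < 1) (hu : ‖u‖ < 1) (N : ℕ) :
    (∏ n ∈ range N, (1 - q ^ n * u)) * qExp q u = qExp q (q ^ N * u) := by
  induction N with
  | zero => simp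
  | succ N ih =>
    rw [prod_range_succ, mul_right_comm, ih, mul_comm (qExp q _),
      one_sub_mul_qExp hq ((norm_pow_mul_le hq N u).trans_lt hu), pow_succ', mul_assoc]

lemma tendsto_qExp_pow_mul (hq : ‖q‖ < 1) (hu : ‖u‖ < 1) :
    Tendsto (fun N : ℕ ↦ qExp q (q ^ N * u)) atTop (𝓝 1) := by
  have hlim (n : ℕ) : Tendsto (fun N : ℕ ↦ (q ^ N * u) ^ n / qPochhammer q n) atTop
      (𝓝 ((0 * u) ^ n / qPochhammer q n)) :=
    (((continuous_mul_const u).pow n).div_const _).continuousAt.tendsto.comp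
      (tendsto_pow_atTop_nhds_zero_of_norm_lt_one hq)
  have hdom : ∀ᶠ N : ℕ in atTop, ∀ n, ‖(q ^ N * u) ^ n / qPochhammer q n‖ ≤
      ‖u ^ n / qPochhammer q n‖ := .of_forall fun N n ↦ by
    rw [norm_div, norm_div, norm_pow, norm_pow]
    gcongr
    exact norm_pow_mul_le hq N u
  have := tendsto_tsum_of_dominated_convergence (summable_norm_pow_div_qPochhammer hq hu) hlim hdom
  rwa [tsum_eq_single 0 fun n hn ↦ by simp [hn], pow_zero, qPochhammer_zero, div_one] at this

theorem hasProd_inv_one_sub_pow_mul_qExp (hq : ‖q‖ < 1) (hu : ‖u‖ < 1) :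
    HasProd (fun n : ℕ ↦ (1 - q ^ n * u)⁻¹) (qExp q u) := by
  obtain ⟨P, hP⟩ := multipliable_inv_one_sub_pow_mul hq hu
  have hpartial (N : ℕ) : (∏ n ∈ range N, (1 - q ^ n * u)⁻¹) * qExp q (q ^ N * u) = qExp q u := by
    rw [← prod_one_sub_pow_mul_mul_qExp hq hu N, prod_inv_distrib, inv_mul_cancel_left₀]
    exact prod_ne_zero_iff.2 fun n _ ↦
      one_sub_ne_zero_of_norm_lt_one ((norm_pow_mul_le hq n u).trans_lt hu)
  have hP' := hP.tendsto_prod_nat.mul (tendsto_qExp_pow_mul hq hu)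
  simp_rw [hpartial, mul_one] at hP'
  rwa [tendsto_nhds_unique tendsto_const_nhds hP']

/-- Euler's identity: the q-exponential series
`∑_{n≥0} (1-q)^n z^n / ((1-q)(1-q²)⋯(1-qⁿ))` equals the infinite product
`∏_{n≥0} (1-(1-q)zq^n)⁻¹` (analytic version for `|q| < 1`, `|(1-q)z| < 1`). -/
theorem qexp_series_eq_product (q z : ℂ) (hq : ‖q‖ < 1) (hz : ‖(1 - q) * z‖ < 1) :
    ∑' n : ℕ, (1 - q) ^ n * z ^ n / ∏ k ∈ Finset.Icc 1 n, (1 - q ^ k)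
      = ∏' n : ℕ, (1 - (1 - q) * z * q ^ n)⁻¹ := by
  have hterm (n : ℕ) : (1 - q) ^ n * z ^ n / ∏ k ∈ Finset.Icc 1 n, (1 - q ^ k)
      = ((1 - q) * z) ^ n / qPochhammer q n := by
    rw [mul_pow, qPochhammer]
  have hfactor (n : ℕ) : (1 - (1 - q) * z * q ^ n)⁻¹ = (1 - q ^ n * ((1 - q) * z))⁻¹ := by
    ring
  simp_rw [hterm, hfactor]
  exact (hasProd_inv_one_sub_pow_mul_qExp hq hz).tprod_eq.symm
end

section
/- Let ℓ be odd, ε a primitive ℓ-th root of unity, and A, B the clock and shift matrices with A v_n = ε^{2n} v_n, B v_n = v_{n+1}. For nonzero complex parameters u, v, x, y, define operators on ℂ^ℓ: K = uvA, L = u^{-1}vA, E = yB, F = y^{-1}u (x v^{-1} ε A^{-1} - 1)(v A ε^{-1} - x^{-1}) B^{-1}. Then these satisfy the relations KL = LK, KE = ε^2 EK, KF = ε^{-2} FK, LE = ε^2 EL, LF = ε^{-2} FL, and EF - FE = (ε - ε^{-1})(K - L^{-1}). -/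
theorem aux_scalar (u v x y ε t : ℂ) (hu : u ≠ 0) (hv : v ≠ 0) (hx : x ≠ 0) (hy : y ≠ 0)
    (hε0 : ε ≠ 0) (ht : t ≠ 0) :
    y * (y⁻¹ * u) * ((x * v⁻¹ * ε * t⁻¹ - 1) * (v * ε⁻¹ * t - x⁻¹)) -
      y⁻¹ * u * y * ((x * v⁻¹ * ε * (ε ^ 2 * t)⁻¹ - 1) * (v * ε⁻¹ * (ε ^ 2 * t) - x⁻¹)) =
    (ε - ε⁻¹) * (u * v * t - u * v⁻¹ * t⁻¹) := by
  have hyy : y * (y⁻¹ * u) = u := by field_simp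
  have hyy' : y⁻¹ * u * y = u := by field_simp
  have e1 : (x * v⁻¹ * ε * t⁻¹ - 1) * (v * ε⁻¹ * t - x⁻¹)
      = x - v⁻¹ * ε * t⁻¹ - v * ε⁻¹ * t + x⁻¹ := by
    rw [show (x * v⁻¹ * ε * t⁻¹ - 1) * (v * ε⁻¹ * t - x⁻¹)
        = x * ((v⁻¹ * v) * ((ε * ε⁻¹) * (t⁻¹ * t))) - (x * x⁻¹) * (v⁻¹ * ε * t⁻¹)
          - v * ε⁻¹ * t + x⁻¹ by ring,
      inv_mul_cancel₀ hv, mul_inv_cancel₀ hε0, inv_mul_cancel₀ ht, mul_inv_cancel₀ hx]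
    ring
  have e2 : (x * v⁻¹ * ε * (ε ^ 2 * t)⁻¹ - 1) * (v * ε⁻¹ * (ε ^ 2 * t) - x⁻¹)
      = x - v⁻¹ * ε⁻¹ * t⁻¹ - v * ε * t + x⁻¹ := by
    rw [mul_inv, show (x * v⁻¹ * ε * ((ε ^ 2)⁻¹ * t⁻¹) - 1) * (v * ε⁻¹ * (ε ^ 2 * t) - x⁻¹)
        = x * ((v⁻¹ * v) * ((ε * ε⁻¹) * ((ε ^ 2 * (ε ^ 2)⁻¹) * (t⁻¹ * t))))
          - (x * x⁻¹) * (v⁻¹ * (ε * (ε ^ 2)⁻¹) * t⁻¹) - v * (ε⁻¹ * ε ^ 2) * t + x⁻¹ by ring,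
      inv_mul_cancel₀ hv, mul_inv_cancel₀ hε0, inv_mul_cancel₀ ht,
      mul_inv_cancel₀ hx, mul_inv_cancel₀ (pow_ne_zero 2 hε0),
      show ε * (ε ^ 2)⁻¹ = ε⁻¹ by field_simp [pow_two],
      show ε⁻¹ * ε ^ 2 = ε by field_simp [pow_two]]
    ring
  rw [hyy, hyy', e1, e2]
  ring

/-- The cyclic representation `K = uvA`, `L = u⁻¹vA`, `E = yB`,
`F = y⁻¹u·B⁻¹·(xv⁻¹εA⁻¹-1)(vAε⁻¹-x⁻¹)` of quantum gl₂ at a primitive ℓ-th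
root of unity ε (ℓ odd) satisfies the defining relations of 𝒰_ε. -/
theorem cyclic_representation_relations (ℓ : ℕ) [NeZero ℓ] (hodd : Odd ℓ) (ε : ℂ)
    (hε : IsPrimitiveRoot ε ℓ) (u v x y : ℂ)
    (hu : u ≠ 0) (hv : v ≠ 0) (hx : x ≠ 0) (hy : y ≠ 0)
    (A B K L E F : Matrix (ZMod ℓ) (ZMod ℓ) ℂ)
    (hA : A = Matrix.diagonal fun n : ZMod ℓ => ε ^ (2 * n.val))
    (hB : B = Matrix.of fun i j : ZMod ℓ => if i = j + 1 then 1 else 0)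
    (hK : K = (u * v) • A)
    (hL : L = (u⁻¹ * v) • A)
    (hE : E = y • B)
    (hF : F = (y⁻¹ * u) •
      (B⁻¹ * (((x * v⁻¹ * ε) • A⁻¹ - 1) * ((v * ε⁻¹) • A - x⁻¹ • (1 : Matrix (ZMod ℓ) (ZMod ℓ) ℂ))))) :
    K * L = L * K ∧
    K * E = ε ^ 2 • (E * K) ∧
    K * F = (ε⁻¹) ^ 2 • (F * K) ∧
    L * E = ε ^ 2 • (E * L) ∧
    L * F = (ε⁻¹) ^ 2 • (F * L) ∧
    E * F - F * E = (ε - ε⁻¹) • (K - L⁻¹) := by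
  have hℓ : ℓ ≠ 0 := NeZero.ne ℓ
  have hε0 : ε ≠ 0 := hε.ne_zero hℓ
  have hmod : ∀ a : ℕ, ε ^ (a % ℓ) = ε ^ a := by
    intro a
    conv_rhs => rw [← Nat.mod_add_div a ℓ]
    rw [pow_add, pow_mul, hε.pow_eq_one, one_pow, mul_one]
  have hcast : ∀ a b : ℕ, ((a : ZMod ℓ) = (b : ZMod ℓ)) → ε ^ a = ε ^ b := by
    intro a b h
    rw [← hmod a, ← hmod b, ← ZMod.val_natCast, ← ZMod.val_natCast, h]
  have hval : ∀ j : ZMod ℓ, ε ^ (2 * (j + 1).val) = ε ^ 2 * ε ^ (2 * j.val) := by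
    intro j
    rw [← pow_add]
    apply hcast
    push_cast [ZMod.natCast_val, ZMod.cast_id]
    ring
  set A' : Matrix (ZMod ℓ) (ZMod ℓ) ℂ := Matrix.diagonal fun n => (ε ^ (2 * n.val))⁻¹ with hA'
  set B' : Matrix (ZMod ℓ) (ZMod ℓ) ℂ := Matrix.of (fun i j => if j = i + 1 then 1 else 0) with hB'
  have key : ∀ a b : ZMod ℓ, (a = b + 1) ↔ (b = a - 1) := by
    intro a b
    constructor <;> intro h <;> simp [h]
  have hAA' : A * A' = 1 := by
    rw [hA, hA', Matrix.diagonal_mul_diagonal,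
      show (fun n : ZMod ℓ => ε ^ (2 * n.val) * (ε ^ (2 * n.val))⁻¹) = fun _ => (1:ℂ)
        from funext fun n => mul_inv_cancel₀ (pow_ne_zero _ hε0), Matrix.diagonal_one]
  have hAinv : A⁻¹ = A' := Matrix.inv_eq_right_inv hAA'
  have hBB' : B * B' = 1 := by
    ext i j
    simp only [Matrix.mul_apply, hB, hB', Matrix.of_apply, Matrix.one_apply, ite_mul, one_mul,
      zero_mul]
    simp only [key i, key j]
    rw [Finset.sum_ite_eq' Finset.univ (i - 1) (fun k => if k = j - 1 then (1:ℂ) else 0)]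
    simp only [Finset.mem_univ, if_true]
    by_cases h : i = j <;> simp [h, sub_left_injective.eq_iff]
  have hBinv : B⁻¹ = B' := Matrix.inv_eq_right_inv hBB'
  set d : ZMod ℓ → ℂ :=
    fun n => (x * v⁻¹ * ε * (ε ^ (2 * n.val))⁻¹ - 1) * (v * ε⁻¹ * ε ^ (2 * n.val) - x⁻¹) with hd
  have hD : ((x * v⁻¹ * ε) • A' - 1) * ((v * ε⁻¹) • A - x⁻¹ • (1 : Matrix (ZMod ℓ) (ZMod ℓ) ℂ))
      = Matrix.diagonal d := by
    ext i j
    by_cases h : i = j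
    · subst h
      simp [hA, hA', hd, Matrix.mul_apply, Matrix.diagonal_apply, Matrix.one_apply,
        ite_sub_ite, sub_zero, ite_mul, zero_mul, Finset.sum_ite_eq]
    · simp [hA, hA', hd, Matrix.mul_apply, Matrix.diagonal_apply, Matrix.one_apply, h,
        ite_sub_ite, sub_zero, ite_mul, zero_mul, Finset.sum_ite_eq]
  have hF' : F = (y⁻¹ * u) • (B' * Matrix.diagonal d) := by rw [hF, hBinv, hAinv, hD]
  -- commutation of A with B, B', diagonal d
  have hAB : A * B = ε ^ 2 • (B * A) := by
    ext i j
    rw [hA, hB]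
    simp only [Matrix.diagonal_mul, Matrix.mul_diagonal, Matrix.smul_apply, Matrix.of_apply,
      smul_eq_mul]
    by_cases h : i = j + 1
    · simp only [h, if_true, mul_one, one_mul, ← hval j]
    · simp [h]
  have hAB' : A * B' = (ε⁻¹) ^ 2 • (B' * A) := by
    ext i j
    rw [hA, hB']
    simp only [Matrix.diagonal_mul, Matrix.mul_diagonal, Matrix.smul_apply, Matrix.of_apply,
      smul_eq_mul]
    by_cases h : j = i + 1
    · simp only [h, if_true, mul_one, one_mul]
      rw [hval i]
      field_simp
    · simp [h]
  have hAd : A * Matrix.diagonal d = Matrix.diagonal d * A := by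
    ext i j
    rw [hA]
    simp only [Matrix.diagonal_mul, Matrix.mul_diagonal, Matrix.diagonal_apply]
    by_cases h : i = j <;> simp [h, mul_comm]
  have hconj : B' * Matrix.diagonal d * B = Matrix.diagonal fun n => d (n + 1) := by
    ext i j
    rw [Matrix.mul_apply]
    simp only [Matrix.mul_diagonal, hB, hB', Matrix.of_apply, Matrix.diagonal_apply, ite_mul,
      one_mul, zero_mul]
    rw [Finset.sum_ite_eq' Finset.univ (i + 1)
      (fun k => d k * if k = j + 1 then (1:ℂ) else 0)]
    simp only [Finset.mem_univ, if_true]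
    by_cases h : i = j <;> simp [h, add_left_injective, mul_comm]
  have hLinv : L⁻¹ = (u * v⁻¹) • A' := by
    apply Matrix.inv_eq_right_inv
    rw [hL, Matrix.smul_mul, Matrix.mul_smul, smul_smul, hAA',
      show u⁻¹ * v * (u * v⁻¹) = 1 by field_simp, one_smul]
  refine ⟨?_, ?_, ?_, ?_, ?_, ?_⟩
  · rw [hK, hL]
    simp only [Matrix.smul_mul, Matrix.mul_smul, smul_smul]
    congr 1
    ring
  · rw [hK, hE]
    simp only [Matrix.smul_mul, Matrix.mul_smul, smul_smul]
    rw [hAB]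
    simp only [smul_smul]
    congr 1
    ring
  · rw [hK, hF']
    simp only [Matrix.smul_mul, Matrix.mul_smul, smul_smul, ← mul_assoc]
    rw [hAB']
    simp only [Matrix.smul_mul, smul_smul]
    rw [mul_assoc B' A (Matrix.diagonal d), hAd, ← mul_assoc]
    congr 1
    ring
  · rw [hL, hE]
    simp only [Matrix.smul_mul, Matrix.mul_smul, smul_smul]
    rw [hAB]
    simp only [smul_smul]
    congr 1
    ring
  · rw [hL, hF']
    simp only [Matrix.smul_mul, Matrix.mul_smul, smul_smul, ← mul_assoc]
    rw [hAB']
    simp only [Matrix.smul_mul, smul_smul]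
    rw [mul_assoc B' A (Matrix.diagonal d), hAd, ← mul_assoc]
    congr 1
    ring
  · rw [hE, hF', hK, hLinv]
    simp only [Matrix.smul_mul, Matrix.mul_smul, smul_smul, ← mul_assoc]
    rw [hBB', one_mul, hconj]
    ext i j
    simp only [Matrix.sub_apply, Matrix.smul_apply, Matrix.diagonal_apply, hA, hA', hd,
      smul_eq_mul]
    by_cases h : i = j
    · subst h
      simp only [if_true, ite_true, if_pos rfl]
      rw [hval i]
      linear_combination aux_scalar u v x y ε (ε ^ (2 * i.val)) hu hv hx hy hε0
        (pow_ne_zero _ hε0)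
    · simp [h]
end

section
/- In the cyclic representation of the previous context, the central element c = EF + Kε^{-1} + L^{-1}ε acts as the scalar u(x + x^{-1}) on ℂ^ℓ. -/
/-- In the cyclic representation, the central element `c = EF + Kε⁻¹ + L⁻¹ε`
acts as the scalar `u(x + x⁻¹)`. -/
theorem cyclic_representation_casimir (ℓ : ℕ) [NeZero ℓ] (hodd : Odd ℓ) (ε : ℂ)
    (hε : IsPrimitiveRoot ε ℓ) (u v x y : ℂ)
    (hu : u ≠ 0) (hv : v ≠ 0) (hx : x ≠ 0) (hy : y ≠ 0)
    (A B K L E F : Matrix (ZMod ℓ) (ZMod ℓ) ℂ)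
    (hA : A = Matrix.diagonal fun n : ZMod ℓ => ε ^ (2 * n.val))
    (hB : B = Matrix.of fun i j : ZMod ℓ => if i = j + 1 then 1 else 0)
    (hK : K = (u * v) • A)
    (hL : L = (u⁻¹ * v) • A)
    (hE : E = y • B)
    (hF : F = (y⁻¹ * u) •
      (B⁻¹ * (((x * v⁻¹ * ε) • A⁻¹ - 1) * ((v * ε⁻¹) • A - x⁻¹ • (1 : Matrix (ZMod ℓ) (ZMod ℓ) ℂ))))) :
    E * F + ε⁻¹ • K + ε • L⁻¹ = (u * (x + x⁻¹)) • (1 : Matrix (ZMod ℓ) (ZMod ℓ) ℂ) := by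
  have hℓ : ℓ ≠ 0 := NeZero.ne ℓ
  have hε0 : ε ≠ 0 := hε.ne_zero hℓ
  have hAdet : IsUnit A.det := by
    rw [hA, Matrix.det_diagonal]
    exact (Finset.prod_ne_zero_iff.mpr fun i _ => pow_ne_zero _ hε0).isUnit
  have hAA : A⁻¹ * A = 1 := Matrix.nonsing_inv_mul A hAdet
  have hAAi : A * A⁻¹ = 1 := Matrix.mul_nonsing_inv A hAdet
  have hBT : B * B.transpose = 1 := by
    subst hB
    ext i k
    simp only [Matrix.mul_apply, Matrix.transpose_apply, Matrix.of_apply, Matrix.one_apply,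
      ite_mul, one_mul, zero_mul, mul_ite, mul_one, mul_zero]
    have key : ∀ j : ZMod ℓ, (if k = j + 1 then (if i = j + 1 then (1:ℂ) else 0) else 0)
        = if j = k - 1 then (if i = k then 1 else 0) else 0 := by
      intro j
      by_cases h : k = j + 1
      · subst h; simp
      · have h2 : j ≠ k - 1 := fun hj => h (by rw [hj]; ring)
        simp [h, h2]
    rw [Finset.sum_congr rfl fun j _ => key j, Finset.sum_ite_eq']
    simp
  have hBinv : B⁻¹ = B.transpose := Matrix.inv_eq_right_inv hBT
  have hBB : B * B⁻¹ = 1 := by rw [hBinv]; exact hBT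
  have hLinv : L⁻¹ = (u * v⁻¹) • A⁻¹ := by
    refine Matrix.inv_eq_right_inv ?_
    rw [hL, Matrix.smul_mul, Matrix.mul_smul, smul_smul, hAAi,
      show (u⁻¹ * v) * (u * v⁻¹) = 1 by field_simp, one_smul]
  rw [hE, hF, hK, hLinv, Matrix.smul_mul, Matrix.mul_smul, smul_smul,
    ← Matrix.mul_assoc, hBB, Matrix.one_mul]
  have hy' : y * (y⁻¹ * u) = u := by field_simp
  rw [hy']
  simp only [Matrix.mul_smul, mul_sub, Matrix.mul_one, hAA, Matrix.one_mul, smul_sub,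
    smul_smul, sub_mul, one_mul]
  simp only [Matrix.smul_mul, smul_smul, hAA]
  match_scalars <;> field_simp <;> ring
end

section
/- Let ℓ be odd and ε a primitive ℓ-th root of unity. The function Φ(z) = ∏_{m=1}^{ℓ} (1 - ε^{2m} z)^{-m/ℓ} (defined as a power series in z via the principal branch of (1-w)^{-m/ℓ}) satisfies the difference equation Φ(ε^2 z) = (1 - z^ℓ)^{1/ℓ} (1 - ε^2 z)^{-1} Φ(z) as formal power series in z. -/
/-!
With `L m = log (1 - ε ^ (2 * m) * z)`, the left-hand side is the exponential of
`∑ (-m/ℓ) L (m + 1)`. Since `L` is `ℓ`-periodic, shifting the index turns this sum into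
`∑ (-m/ℓ) L m + (1/ℓ) ∑ L m - L 1`. Near `z = 0` the principal branches add up,
`∑ L m = log (1 - z ^ ℓ)`: both sides are continuous, vanish at `0`, and have the same
exponential `∏ (1 - ε ^ (2 * m) * z) = 1 - z ^ ℓ`, as `ε ^ 2` is again a primitive `ℓ`-th root
of unity for odd `ℓ`.
-/

open Finset Complex Filter Topology

theorem Finset.prod_Icc_one_eq_prod_range_succ {M : Type*} [CommMonoid M] (f : ℕ → M) (n : ℕ) :
    ∏ i ∈ Icc 1 n, f i = ∏ i ∈ range n, f (i + 1) := by
  rw [← Ico_add_one_right_eq_Icc, prod_Ico_eq_prod_range]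
  simp [add_comm 1]

theorem Finset.sum_Icc_comp_succ {M : Type*} [AddCommGroup M] (f : ℕ → M) (n : ℕ) :
    ∑ i ∈ Icc 1 n, f (i + 1) = ∑ i ∈ Icc 1 n, f i + (f (n + 1) - f 1) := by
  rcases Nat.eq_zero_or_pos n with rfl | hn
  · simp
  · rw [← sum_Icc_sub hn f, ← sum_add_distrib]
    simp_rw [add_sub_cancel]

theorem sum_Icc_neg_div_mul_succ {K : Type*} [Field K] {n : ℕ} (hn : (n : K) ≠ 0)
    (f : ℕ → K) (hf : f (n + 1) = f 1) :
    ∑ m ∈ Icc 1 n, (-(m : K) / n) * f (m + 1)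
      = ∑ m ∈ Icc 1 n, (-(m : K) / n) * f m + (n : K)⁻¹ * ∑ m ∈ Icc 1 n, f m - f 1 := by
  have hweight : ∀ m : ℕ, (-(m : K) / n) * f (m + 1)
      = (-((m + 1 : ℕ) : K) / n) * f (m + 1) + (n : K)⁻¹ * f (m + 1) := by
    intro m; push_cast; field_simp; ring
  simp_rw [hweight, sum_add_distrib, ← mul_sum,
    sum_Icc_comp_succ (fun m => (-(m : K) / n) * f m), sum_Icc_comp_succ f, hf]
  push_cast
  field_simp
  ring

theorem IsPrimitiveRoot.prod_Icc_one_sub_pow_mul {R : Type*} [CommRing R] [IsDomain R] {ζ : R}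
    {n : ℕ} (hζ : IsPrimitiveRoot ζ n) (hn : 0 < n) (z : R) :
    ∏ m ∈ Icc 1 n, (1 - ζ ^ m * z) = 1 - z ^ n := by
  -- factor `X ^ n - z ^ n` over the roots `ζ ^ i * (ζ * z)` and evaluate at `1`
  have hfactor := congrArg (Polynomial.eval 1)
    (X_pow_sub_C_eq_prod hζ hn (α := ζ * z) (by rw [mul_pow, hζ.pow_eq_one, one_mul]))
  simp only [Polynomial.eval_sub, Polynomial.eval_pow, Polynomial.eval_X, Polynomial.eval_C,
    Polynomial.eval_prod, one_pow] at hfactor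
  rw [hfactor, prod_Icc_one_eq_prod_range_succ]
  simp_rw [pow_succ, mul_assoc]

theorem eventually_eq_of_exp_eq {X : Type*} [TopologicalSpace X] {f g : X → ℂ} {x : X}
    (hf : ContinuousAt f x) (hg : ContinuousAt g x) (hx : f x = g x)
    (h : ∀ᶠ y in 𝓝 x, exp (f y) = exp (g y)) : ∀ᶠ y in 𝓝 x, f y = g y := by
  have hsmall : ∀ᶠ y in 𝓝 x, ‖f y - g y‖ < 2 * Real.pi :=
    (hf.sub hg).norm.eventually_lt continuousAt_const (by simp [hx, Real.pi_pos])
  filter_upwards [h, hsmall] with y hexp hy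
  obtain ⟨k, hk⟩ := exp_eq_exp_iff_exists_int.1 hexp
  rw [hk, add_sub_cancel_left, norm_mul, norm_intCast, norm_mul, norm_mul, norm_I, mul_one,
    Complex.norm_real, Real.norm_of_nonneg Real.pi_pos.le, RCLike.norm_two] at hy
  have hk0 : k = 0 := by
    have hk1 : |(k : ℝ)| < 1 := by nlinarith [Real.pi_pos]
    exact Int.abs_lt_one_iff.1 (by exact_mod_cast hk1)
  simpa [hk0] using hk

theorem IsPrimitiveRoot.eventually_sum_log_one_sub_pow_mul {ζ : ℂ} {n : ℕ}
    (hζ : IsPrimitiveRoot ζ n) (hn : 0 < n) :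
    ∀ᶠ z in 𝓝 0, ∑ m ∈ Icc 1 n, log (1 - ζ ^ m * z) = log (1 - z ^ n) := by
  have hne : ∀ᶠ z : ℂ in 𝓝 0, 1 - z ^ n ≠ 0 :=
    (by fun_prop : Continuous fun z : ℂ => 1 - z ^ n).continuousAt.eventually_ne
      (by simp [hn.ne'])
  refine eventually_eq_of_exp_eq ?_ ?_ (by simp [hn.ne']) ?_
  · exact tendsto_finsetSum _ fun m _ => ContinuousAt.clog (by fun_prop) (by simp)
  · exact ContinuousAt.clog (by fun_prop) (by simp [hn.ne'])
  filter_upwards [hne] with z hz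
  have hfactors := hζ.prod_Icc_one_sub_pow_mul hn z
  have hfactor_ne : ∀ m ∈ Icc 1 n, 1 - ζ ^ m * z ≠ 0 := prod_ne_zero_iff.1 (hfactors ▸ hz)
  rw [exp_sum, prod_congr rfl (g := fun m => 1 - ζ ^ m * z) fun m hm => exp_log (hfactor_ne m hm),
    hfactors, exp_log hz]

theorem Phi_difference_equation_general (ℓ : ℕ) (hodd : Odd ℓ) (ε : ℂ)
    (hε : IsPrimitiveRoot ε ℓ) :
    ∃ r > (0 : ℝ), ∀ z : ℂ, ‖z‖ < r →
      Complex.exp (∑ m ∈ Finset.Icc 1 ℓ, (-(m : ℂ) / ℓ) * Complex.log (1 - ε ^ (2 * m) * (ε ^ 2 * z)))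
        = (1 - z ^ ℓ) ^ ((ℓ : ℂ)⁻¹) * (1 - ε ^ 2 * z)⁻¹ *
          Complex.exp (∑ m ∈ Finset.Icc 1 ℓ, (-(m : ℂ) / ℓ) * Complex.log (1 - ε ^ (2 * m) * z)) := by
  have hℓ : 0 < ℓ := hodd.pos
  have hε2 : IsPrimitiveRoot (ε ^ 2) ℓ := hε.pow_of_coprime 2 (Nat.coprime_two_left.mpr hodd)
  have hnear : ∀ᶠ z : ℂ in 𝓝 0, 1 - ε ^ 2 * z ≠ 0 ∧ 1 - z ^ ℓ ≠ 0 ∧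
      ∑ m ∈ Icc 1 ℓ, log (1 - (ε ^ 2) ^ m * z) = log (1 - z ^ ℓ) :=
    ((by fun_prop : Continuous fun z : ℂ => 1 - ε ^ 2 * z).continuousAt.eventually_ne
      (by simp)).and <|
    ((by fun_prop : Continuous fun z : ℂ => 1 - z ^ ℓ).continuousAt.eventually_ne
      (by simp [hℓ.ne'])).and (hε2.eventually_sum_log_one_sub_pow_mul hℓ)
  obtain ⟨r, hr, hball⟩ := Metric.eventually_nhds_iff.1 hnear
  refine ⟨r, hr, fun z hz => ?_⟩
  obtain ⟨hne, hneℓ, hsum⟩ := hball (by simpa using hz)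
  set L : ℕ → ℂ := fun m => log (1 - ε ^ (2 * m) * z) with hL
  have hshift : ∀ m : ℕ, log (1 - ε ^ (2 * m) * (ε ^ 2 * z)) = L (m + 1) := fun m => by
    rw [hL]; ring_nf
  have hperiodic : L (ℓ + 1) = L 1 := by
    simp only [hL, pow_add, pow_mul', hε.pow_eq_one, one_mul]
  have hL1 : exp (L 1) = 1 - ε ^ 2 * z := by simpa only [hL, mul_one] using exp_log hne
  have hsumL : ∑ m ∈ Icc 1 ℓ, L m = log (1 - z ^ ℓ) := by simpa only [hL, ← pow_mul] using hsum
  simp_rw [hshift, sum_Icc_neg_div_mul_succ (by exact_mod_cast hℓ.ne') L hperiodic, hsumL,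
    cpow_def_of_ne_zero hneℓ, exp_sub, exp_add, hL1, mul_comm (log _)]
  ring

/-- The function `Φ(z) = ∏_{m=1}^ℓ (1-ε^{2m}z)^{-m/ℓ}`, written as
`exp (∑_{m=1}^ℓ (-m/ℓ) log(1-ε^{2m}z))`, satisfies the difference equation
`Φ(ε²z) = (1-zℓ)^{1/ℓ} (1-ε²z)⁻¹ Φ(z)` for z in a neighbourhood of 0. -/
theorem Phi_difference_equation (ℓ : ℕ) (hpos : 0 < ℓ) (hodd : Odd ℓ) (ε : ℂ)
    (hε : IsPrimitiveRoot ε ℓ) :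
    ∃ r > (0 : ℝ), ∀ z : ℂ, ‖z‖ < r →
      Complex.exp (∑ m ∈ Finset.Icc 1 ℓ, (-(m : ℂ) / ℓ) * Complex.log (1 - ε ^ (2 * m) * (ε ^ 2 * z)))
        = (1 - z ^ ℓ) ^ ((ℓ : ℂ)⁻¹) * (1 - ε ^ 2 * z)⁻¹ *
          Complex.exp (∑ m ∈ Finset.Icc 1 ℓ, (-(m : ℂ) / ℓ) * Complex.log (1 - ε ^ (2 * m) * z)) :=
  Phi_difference_equation_general ℓ hodd ε hε
end

section
/- Let ℓ be odd, ε a primitive ℓ-th root of unity, and for parameters u, v, x with the quantities (xv^{-1}ε^{-2m+1}-1)(vε^{2m-1}-x^{-1}) nonzero for all m, let z satisfy z^ℓ = (x^ℓ v^{-ℓ} - 1)(v^ℓ - x^{-ℓ}). Define the diagonal operator U on ℂ^ℓ by U v_n = z ∏_{m=1}^n ((xv^{-1}ε^{-2m+1}-1)^{-1}(vε^{2m-1}-x^{-1})^{-1}) v_n. Then U satisfies U^{-1} (xv^{-1}εA^{-1}-1)(vAε^{-1}-x^{-1}) B^{-1} U = B^{-1}, where A, B are the clock and shift matrices. -/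
/-!
The product of the two clock factors is the diagonal matrix `D = diag(wₙ)` with
`wₙ = weight ε v x n`, and `U = diag(uₙ)` with `uₙ = zⁿ ∏_{m<n} wₘ⁻¹`. As `B⁻¹` shifts indices
by one, `U⁻¹ D B⁻¹ U = z B⁻¹` amounts to `wₙ uₙ₊₁ = z uₙ` on `ZMod ℓ`. This holds by
construction except at the wrap-around `n = ℓ - 1`, where it says `∏_{m<ℓ} wₘ = z^ℓ`. Since `ℓ`
is odd, `ε^{±2}` is again a primitive `ℓ`-th root of unity, and that product is evaluated by
`x^ℓ - y^ℓ = ∏ᵢ (x - ζⁱ y)`.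
-/

open Finset

namespace IsPrimitiveRoot

theorem pow_sub_pow_eq_prod_range_sub {R : Type*} [CommRing R] [IsDomain R] {ζ : R} {n : ℕ}
    (hζ : IsPrimitiveRoot ζ n) (hn : 0 < n) (x y : R) :
    x ^ n - y ^ n = ∏ i ∈ range n, (x - ζ ^ i * y) := by
  simpa [Polynomial.eval_prod] using
    congrArg (Polynomial.eval x) (X_pow_sub_C_eq_prod hζ hn rfl)

theorem prod_range_pow_mul_sub {R : Type*} [CommRing R] [IsDomain R] {ζ : R} {n : ℕ}
    (hζ : IsPrimitiveRoot ζ n) (hodd : Odd n) (x y : R) :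
    ∏ i ∈ range n, (ζ ^ i * x - y) = x ^ n - y ^ n := by
  calc ∏ i ∈ range n, (ζ ^ i * x - y) = ∏ i ∈ range n, -(y - ζ ^ i * x) := by simp
    _ = x ^ n - y ^ n := by
      rw [prod_neg, card_range, hodd.neg_one_pow, ← hζ.pow_sub_pow_eq_prod_range_sub hodd.pos]
      ring

theorem prod_range_mul_zpow_sub {K : Type*} [Field K] {ε : K} {ℓ : ℕ}
    (hε : IsPrimitiveRoot ε ℓ) (hodd : Odd ℓ) {k : ℤ} (hk : k.gcd ℓ = 1) (d : ℤ) (a b : K) :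
    ∏ m ∈ range ℓ, (a * ε ^ (k * m + d) - b) = a ^ ℓ - b ^ ℓ := by
  have hε0 : ε ≠ 0 := hε.ne_zero hodd.pos.ne'
  have hterm : ∀ m : ℕ, a * ε ^ (k * m + d) = (ε ^ k) ^ m * (a * ε ^ d) := by
    intro m
    rw [zpow_add₀ hε0, _root_.zpow_mul, zpow_natCast]
    ring
  have hperiod : (ε ^ d) ^ ℓ = 1 := by
    rw [← zpow_natCast, ← _root_.zpow_mul, mul_comm, _root_.zpow_mul, zpow_natCast,
      hε.pow_eq_one, one_zpow]
  simp_rw [hterm]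
  rw [(hε.zpow_of_gcd_eq_one k hk).prod_range_pow_mul_sub hodd, mul_pow, hperiod, mul_one]

end IsPrimitiveRoot

def weight {K : Type*} [Field K] (ε v x : K) (m : ℕ) : K :=
  (x * v⁻¹ * ε ^ (-2 * (m : ℤ) + 1) - 1) * (v * ε ^ (2 * (m : ℤ) - 1) - x⁻¹)

theorem weight_eq_pow {K : Type*} [Field K] {ε : K} (hε : ε ≠ 0) (v x : K) (m : ℕ) :
    weight ε v x m = (x * v⁻¹ * ε * (ε ^ (2 * m))⁻¹ - 1) * (v * ε⁻¹ * ε ^ (2 * m) - x⁻¹) := by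
  have h₁ : ε ^ (-2 * (m : ℤ) + 1) = ε * (ε ^ (2 * m))⁻¹ := by
    rw [← zpow_natCast, ← zpow_neg, ← zpow_one_add₀ hε]
    push_cast
    ring_nf
  have h₂ : ε ^ (2 * (m : ℤ) - 1) = ε⁻¹ * ε ^ (2 * m) := by
    rw [← zpow_natCast, ← zpow_neg_one, ← zpow_add₀ hε]
    push_cast
    ring_nf
  rw [weight, h₁, h₂]
  ring

theorem prod_range_weight {K : Type*} [Field K] {ε : K} {ℓ : ℕ} (hε : IsPrimitiveRoot ε ℓ)
    (hodd : Odd ℓ) (v x : K) :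
    ∏ m ∈ range ℓ, weight ε v x m = (x ^ ℓ * (v ^ ℓ)⁻¹ - 1) * (v ^ ℓ - (x ^ ℓ)⁻¹) := by
  have h2 : Int.gcd 2 ℓ = 1 := by simpa [Int.gcd] using Nat.coprime_two_left.mpr hodd
  simp_rw [weight, sub_eq_add_neg (2 * _ : ℤ) 1]
  rw [prod_mul_distrib, hε.prod_range_mul_zpow_sub hodd (by rwa [Int.neg_gcd]),
    hε.prod_range_mul_zpow_sub hodd h2, mul_pow, inv_pow, inv_pow, one_pow]

section CyclicGauge

variable {K : Type*} [Field K] (w : ℕ → K) (z : K)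

def cyclicGauge (n : ℕ) : K := z ^ n * ∏ m ∈ range n, (w m)⁻¹

theorem cyclicGauge_zero : cyclicGauge w z 0 = 1 := by
  simp [cyclicGauge]

variable {w z}

theorem mul_cyclicGauge_succ {n : ℕ} (hw : w n ≠ 0) :
    w n * cyclicGauge w z (n + 1) = z * cyclicGauge w z n := by
  simp only [cyclicGauge, prod_range_succ, pow_succ]
  field_simp

theorem cyclicGauge_ne_zero (hw : ∀ m, w m ≠ 0) (hz : z ≠ 0) (n : ℕ) : cyclicGauge w z n ≠ 0 :=
  mul_ne_zero (pow_ne_zero n hz) (prod_ne_zero_iff.2 fun m _ => inv_ne_zero (hw m))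

theorem cyclicGauge_eq_one {ℓ : ℕ} (hw : ∀ m, w m ≠ 0) (hprod : ∏ m ∈ range ℓ, w m = z ^ ℓ) :
    cyclicGauge w z ℓ = 1 := by
  rw [cyclicGauge, prod_inv_distrib, ← hprod, mul_inv_cancel₀ (prod_ne_zero_iff.2 fun m _ => hw m)]

theorem mul_cyclicGauge_val_add_one {ℓ : ℕ} [NeZero ℓ] (hw : ∀ m, w m ≠ 0)
    (hprod : ∏ m ∈ range ℓ, w m = z ^ ℓ) (i : ZMod ℓ) :
    w i.val * cyclicGauge w z (i + 1).val = z * cyclicGauge w z i.val := by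
  rw [← mul_cyclicGauge_succ (hw i.val)]
  congr 1
  have hcast : i + 1 = ((i.val + 1 : ℕ) : ZMod ℓ) := by push_cast; rw [ZMod.natCast_zmod_val]
  rcases (show i.val + 1 ≤ ℓ from i.val_lt).lt_or_eq with hlt | heq
  · rw [hcast, ZMod.val_cast_of_lt hlt]
  · rw [hcast, heq, ZMod.natCast_self, ZMod.val_zero, cyclicGauge_zero, cyclicGauge_eq_one hw hprod]

end CyclicGauge

namespace Matrix

section CyclicShift

variable {G R : Type*} [AddGroupWithOne G] [Fintype G] [DecidableEq G] [CommRing R]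

theorem inv_of_eq_add_one :
    (of fun i j : G => if i = j + 1 then (1 : R) else 0)⁻¹
      = of fun i j => if j = i + 1 then 1 else 0 := by
  refine inv_eq_right_inv (ext fun i j => ?_)
  rw [mul_apply, sum_eq_single (i - 1)]
  · simp [one_apply, eq_comm]
  · intro k _ hk
    simp [show i ≠ k + 1 from fun h => hk (eq_sub_of_add_eq h.symm)]
  · simp

theorem diagonal_mul_of_add_one_mul_diagonal {w u : G → R} {z : R}
    (h : ∀ i, w i * u (i + 1) = z * u i) :
    diagonal w * (of fun i j : G => if j = i + 1 then (1 : R) else 0) * diagonal u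
      = diagonal u * z • of fun i j => if j = i + 1 then 1 else 0 := by
  ext i j
  simp only [mul_diagonal, diagonal_mul, smul_apply, of_apply]
  split_ifs with hj
  · rw [hj, mul_one, h, smul_eq_mul, mul_one, mul_comm]
  · simp

end CyclicShift

theorem smul_inv_diagonal_sub_one_mul_smul_diagonal_sub {n K : Type*} [Fintype n]
    [DecidableEq n] [Field K] {a : n → K} (ha : ∀ i, a i ≠ 0) (α β γ : K) :
    (α • (diagonal a)⁻¹ - 1) * (β • diagonal a - γ • 1)
      = diagonal fun i => (α * (a i)⁻¹ - 1) * (β * a i - γ) := by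
  have hinv : (diagonal a)⁻¹ = diagonal a⁻¹ :=
    inv_eq_right_inv (by rw [diagonal_mul_diagonal, ← diagonal_one]; simp [ha])
  rw [hinv, ← diagonal_one, ← diagonal_smul, ← diagonal_smul, ← diagonal_smul, diagonal_sub,
    diagonal_sub, diagonal_mul_diagonal]
  simp

end Matrix

theorem U_conjugates_F_part_to_shift_general (ℓ : ℕ) [NeZero ℓ] (hodd : Odd ℓ) (ε : ℂ)
    (hε : IsPrimitiveRoot ε ℓ) (v x z : ℂ)
    (hw : ∀ m : ℕ,
      (x * v⁻¹ * ε ^ (-2 * (m : ℤ) + 1) - 1) * (v * ε ^ (2 * (m : ℤ) - 1) - x⁻¹) ≠ 0)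
    (hz : z ^ ℓ = (x ^ ℓ * (v ^ ℓ)⁻¹ - 1) * (v ^ ℓ - (x ^ ℓ)⁻¹))
    (A B U : Matrix (ZMod ℓ) (ZMod ℓ) ℂ)
    (hA : A = Matrix.diagonal fun n : ZMod ℓ => ε ^ (2 * n.val))
    (hB : B = Matrix.of fun i j : ZMod ℓ => if i = j + 1 then 1 else 0)
    (hU : U = Matrix.diagonal fun n : ZMod ℓ => z ^ n.val *
      ∏ m ∈ Finset.range n.val,
        ((x * v⁻¹ * ε ^ (-2 * (m : ℤ) + 1) - 1) * (v * ε ^ (2 * (m : ℤ) - 1) - x⁻¹))⁻¹) :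
    U⁻¹ * (((x * v⁻¹ * ε) • A⁻¹ - 1) *
        ((v * ε⁻¹) • A - x⁻¹ • (1 : Matrix (ZMod ℓ) (ZMod ℓ) ℂ)) * B⁻¹) * U
      = z • B⁻¹ := by
  have hε0 : ε ≠ 0 := hε.ne_zero (NeZero.ne ℓ)
  have hprod : ∏ m ∈ range ℓ, weight ε v x m = z ^ ℓ := hz ▸ prod_range_weight hε hodd v x
  have hz0 : z ≠ 0 := by
    rintro rfl
    exact (prod_ne_zero_iff (f := weight ε v x)).2 (fun m _ => hw m)
      (hprod.trans (zero_pow (NeZero.ne ℓ)))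
  have hD : ((x * v⁻¹ * ε) • A⁻¹ - 1) * ((v * ε⁻¹) • A - x⁻¹ • 1)
      = Matrix.diagonal fun n : ZMod ℓ => weight ε v x n.val := by
    rw [hA, Matrix.smul_inv_diagonal_sub_one_mul_smul_diagonal_sub fun _ => pow_ne_zero _ hε0]
    simp only [weight_eq_pow hε0]
  have hU' : U = Matrix.diagonal fun n : ZMod ℓ => cyclicGauge (weight ε v x) z n.val := hU
  have hUdet : IsUnit U.det := by
    rw [hU', Matrix.det_diagonal]
    exact (prod_ne_zero_iff.2 fun n _ => cyclicGauge_ne_zero hw hz0 n.val).isUnit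
  rw [hB, Matrix.inv_of_eq_add_one, hD, Matrix.mul_assoc, hU',
    Matrix.diagonal_mul_of_add_one_mul_diagonal (mul_cyclicGauge_val_add_one hw hprod), ← hU']
  exact Matrix.nonsing_inv_mul_cancel_left _ _ hUdet

/-- The diagonal operator U (with `U vₙ = zⁿ ∏_{m<n} wₘ⁻¹ vₙ`, where
`wₘ = (xv⁻¹ε^{-2m+1}-1)(vε^{2m-1}-x⁻¹)` and `zℓ = (xℓv^{-ℓ}-1)(vℓ-x^{-ℓ})`)
conjugates `(xv⁻¹εA⁻¹-1)(vAε⁻¹-x⁻¹)B⁻¹` into `z·B⁻¹`. -/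
theorem U_conjugates_F_part_to_shift (ℓ : ℕ) [NeZero ℓ] (hodd : Odd ℓ) (ε : ℂ)
    (hε : IsPrimitiveRoot ε ℓ) (u v x z : ℂ)
    (hw : ∀ m : ℕ,
      (x * v⁻¹ * ε ^ (-2 * (m : ℤ) + 1) - 1) * (v * ε ^ (2 * (m : ℤ) - 1) - x⁻¹) ≠ 0)
    (hz : z ^ ℓ = (x ^ ℓ * (v ^ ℓ)⁻¹ - 1) * (v ^ ℓ - (x ^ ℓ)⁻¹))
    (A B U : Matrix (ZMod ℓ) (ZMod ℓ) ℂ)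
    (hA : A = Matrix.diagonal fun n : ZMod ℓ => ε ^ (2 * n.val))
    (hB : B = Matrix.of fun i j : ZMod ℓ => if i = j + 1 then 1 else 0)
    (hU : U = Matrix.diagonal fun n : ZMod ℓ => z ^ n.val *
      ∏ m ∈ Finset.range n.val,
        ((x * v⁻¹ * ε ^ (-2 * (m : ℤ) + 1) - 1) * (v * ε ^ (2 * (m : ℤ) - 1) - x⁻¹))⁻¹) :
    U⁻¹ * (((x * v⁻¹ * ε) • A⁻¹ - 1) *
        ((v * ε⁻¹) • A - x⁻¹ • (1 : Matrix (ZMod ℓ) (ZMod ℓ) ℂ)) * B⁻¹) * U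
      = z • B⁻¹ :=
  U_conjugates_F_part_to_shift_general ℓ hodd ε hε v x z hw hz A B U hA hB hU
end
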